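/- arXiv:2408.16242 — 3 statements merged into one kernel-verified Lean document; each statement's English description precedes it below -/
import Mathlib

section
/- Let G be a finite group and Z ≤ Z(G). For N ≤ Z, let I(G:Z)_N index the Z-orbits of conjugacy classes K with Ann_Z(K) = N. Then for any N ≤ Z, Σ_{X ≤ N} |I(G:Z)_X| = |I(G/N : Z/N)_{1}|; that is, the number of Z/N-orbit representatives of conjugacy classes of G/N with trivial Z/N-stabilizer equals the total number of Z-orbit representatives of conjugacy classes of G whose stabilizer is contained in N. -/
open scoped Pointwise BigOperators

set_option synthInstance.maxHeartbeats 1000000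
set_option maxHeartbeats 1000000

noncomputable section HaradaPreamble

/-- The semilinear anti-automorphism of the complex group algebra sending `[g]` to `[g⁻¹]`
and conjugating coefficients. -/
def gaStar {G : Type*} [Group G] (u : MonoidAlgebra ℂ G) : MonoidAlgebra ℂ G :=
  ∑ᶠ g : G, MonoidAlgebra.single g⁻¹ ((starRingEnd ℂ) (u.coeff g))

/-- Multiplication by `x` as a linear endomorphism of the center `Z(ℂG)` of the group algebra,
defined to be `0` if `x` is not central. -/
def centerMulHom {G : Type*} [Group G] (x : MonoidAlgebra ℂ G) :
    Subalgebra.center ℂ (MonoidAlgebra ℂ G) →ₗ[ℂ] Subalgebra.center ℂ (MonoidAlgebra ℂ G) :=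
  letI := Classical.dec (x ∈ Subalgebra.center ℂ (MonoidAlgebra ℂ G))
  if h : x ∈ Subalgebra.center ℂ (MonoidAlgebra ℂ G) then
    LinearMap.mulLeft ℂ (⟨x, h⟩ : Subalgebra.center ℂ (MonoidAlgebra ℂ G))
  else 0

/-- The Hermitian form `⟨u|v⟩ = tr_{Z(ℂG)}(ū v)` on the group algebra. -/
def hform {G : Type*} [Group G] (u v : MonoidAlgebra ℂ G) : ℂ :=
  LinearMap.trace ℂ _ (centerMulHom (gaStar u * v))

/-- The class sum `[K] = ∑_{x ∈ K} [x]` of a conjugacy class. -/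
def classSum {G : Type*} [Group G] (K : ConjClasses G) : MonoidAlgebra ℂ G :=
  ∑ᶠ g ∈ K.carrier, MonoidAlgebra.single g (1 : ℂ)

/-- `χ : G → ℂ` is an irreducible complex character: the trace of a finite-dimensional
complex representation which is nonzero and has no nontrivial invariant subspaces. -/
def IsIrrChar {G : Type*} [Group G] (χ : G → ℂ) : Prop :=
  ∃ (V : Type) (_ : AddCommGroup V) (_ : Module ℂ V) (_ : FiniteDimensional ℂ V)
    (ρ : Representation ℂ G V), Nontrivial V ∧
    (∀ W : Submodule ℂ V, (∀ g : G, W.map (ρ g) ≤ W) → W = ⊥ ∨ W = ⊤) ∧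
    χ = fun g => LinearMap.trace ℂ V (ρ g)

/-- The set of irreducible complex characters of `G`. -/
def irrChars (G : Type*) [Group G] : Set (G → ℂ) :=
  {χ | IsIrrChar χ}

/-- Harada's number `h(G)`: the product of all conjugacy class sizes divided by the
product of the degrees of all irreducible complex characters. -/
def haradaNumber (G : Type*) [Group G] : ℂ :=
  (∏ᶠ c : ConjClasses G, (Nat.card c.carrier : ℂ)) / ∏ᶠ χ ∈ irrChars G, χ 1

/-- `c(G) = ∏ |C_G(g_i)|`, the product of centralizer orders over conjugacy class
representatives. -/
def cG (G : Type*) [Group G] : ℕ :=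
  ∏ᶠ c : ConjClasses G, Nat.card (Subgroup.centralizer {Quotient.out c} : Subgroup G)

/-- `γ(G)`: the absolute value of the Gramian determinant of the class sums with
respect to the trace form on `Z(ℂG)`. -/
def gammaG (G : Type*) [Group G] [Finite G] : ℝ :=
  letI : Fintype (ConjClasses G) := Fintype.ofFinite _
  letI : DecidableEq (ConjClasses G) := Classical.decEq _
  ‖(Matrix.det (Matrix.of fun i j : ConjClasses G =>
    hform (classSum i) (classSum j)))‖

/-- `Ann_Z(K) = {z ∈ Z | zK = K}`, as a subgroup of `Z`. -/
def annZ {G : Type*} [Group G] (Z : Subgroup G) (K : ConjClasses G) : Subgroup ↥Z :=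
  (MulAction.stabilizer G K.carrier).comap Z.subtype

/-- The equivalence relation on conjugacy classes (satisfying `P`) given by translation
by elements of the central subgroup `Z`. -/
def zSetoid {G : Type*} [Group G] (Z : Subgroup G) (P : ConjClasses G → Prop) :
    Setoid {K : ConjClasses G // P K} where
  r K L := ∃ z ∈ Z, z • K.1.carrier = L.1.carrier
  iseqv := by
    constructor
    · exact fun K => ⟨1, one_mem Z, one_smul _ _⟩
    · rintro K L ⟨z, hz, h⟩
      exact ⟨z⁻¹, inv_mem hz, by rw [← h, inv_smul_smul]⟩
    · rintro K L M ⟨z, hz, h⟩ ⟨w, hw, h'⟩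
      exact ⟨w * z, mul_mem hw hz, by rw [mul_smul, h, h']⟩

/-- `|I(G:Z)_N|`: the number of `Z`-orbits of conjugacy classes `K` of `G` with
`Ann_Z(K) = N`. -/
def nIGZ (G : Type*) [Group G] (Z : Subgroup G) (N : Subgroup ↥Z) : ℕ :=
  Nat.card (Quotient (zSetoid Z fun K => annZ Z K = N))

/-- The index set of the basis `B(G)_φ`: `Z`-orbits of conjugacy classes `K` with
`Ann_Z(K) ≤ ker φ`. -/
abbrev RepIdx (G : Type*) [Group G] (Z : Subgroup G) (φ : ↥Z →* ℂˣ) :=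
  Quotient (zSetoid Z fun K => annZ Z K ≤ φ.ker)

/-- A chosen representative conjugacy class for each index in `RepIdx`. -/
def repClass {G : Type*} [Group G] {Z : Subgroup G} {φ : ↥Z →* ℂˣ} (o : RepIdx G Z φ) :
    ConjClasses G := (Quotient.out o).1

/-- The central idempotent `e_φ = (1/|Z|) ∑_{z ∈ Z} conj(φ(z)) [z]`. -/
def ephi {G : Type*} [Group G] (Z : Subgroup G) (φ : ↥Z →* ℂˣ) : MonoidAlgebra ℂ G :=
  (Nat.card Z : ℂ)⁻¹ • ∑ᶠ z : ↥Z, MonoidAlgebra.single (z : G) ((starRingEnd ℂ) (φ z : ℂ))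

/-- `γ_φ(G)`: the absolute value of the Gramian determinant of the family
`e_φ [K_j]`, `j ∈ I(G:Z)_X`, `X ≤ ker φ`. -/
def gammaPhi (G : Type*) [Group G] [Finite G] (Z : Subgroup G) (φ : ↥Z →* ℂˣ) : ℝ :=
  letI : Fintype (RepIdx G Z φ) := Fintype.ofFinite _
  letI : DecidableEq (RepIdx G Z φ) := Classical.decEq _
  ‖(Matrix.det (Matrix.of fun i j : RepIdx G Z φ =>
    hform (ephi Z φ * classSum (repClass i)) (ephi Z φ * classSum (repClass j))))‖

/-- `c_φ(G) = ∏_{N ≤ ker φ} ∏_{j ∈ I(G:Z)_N} |C_G(g_j)| / |Z/N|`. -/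
def cPhi (G : Type*) [Group G] (Z : Subgroup G) (φ : ↥Z →* ℂˣ) : ℚ :=
  ∏ᶠ o : RepIdx G Z φ,
    ((Nat.card (Subgroup.centralizer {Quotient.out (repClass o)} : Subgroup G) : ℚ) /
      ((annZ Z (repClass o)).index : ℚ))

/-- `μ_φ(G) = γ_φ(G) / c_φ(G)`. -/
def muPhi (G : Type*) [Group G] [Finite G] (Z : Subgroup G) (φ : ↥Z →* ℂˣ) : ℝ :=
  gammaPhi G Z φ / (cPhi G Z φ : ℝ)

/-- `κ_N(G) = ∏_{X ≤ N} |X| ^ |I(G:Z)_X|`. -/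
def kappaN (G : Type*) [Group G] (Z : Subgroup G) (N : Subgroup ↥Z) : ℕ :=
  ∏ᶠ X ∈ {X : Subgroup ↥Z | X ≤ N}, Nat.card X ^ nIGZ G Z X

end HaradaPreamble

/-!
Both sides count orbits of `Z` acting by translation on conjugacy classes: the left side the
orbits with `Ann_Z(K) ≤ N`, sorted by their annihilator. As `N` is central, `K ↦ π_N(K)` induces
a bijection from `Z`-orbits of classes of `G` to `Z/N`-orbits of classes of `G/N`, because
`π_N(zK) = π_N(L)` exactly when `nzK = L` for some `n ∈ N`. The same observation gives
`π_N⁻¹(Ann_{Z/N}(π_N K)) = N · Ann_Z(K)`, so `Ann_{Z/N}(π_N K)` is trivial iff `Ann_Z(K) ≤ N`.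
-/

theorem Nat.card_subtype_mem_eq_finsum {α β : Type*} [Finite α] [Finite β] (f : α → β)
    (S : Set β) : Nat.card {a // f a ∈ S} = ∑ᶠ b ∈ S, Nat.card {a // f a = b} := by
  have : Fintype S := Fintype.ofFinite S
  rw [← Nat.card_congr (Equiv.sigmaSubtypeFiberEquivSubtype f fun _ => Iff.rfl), Nat.card_sigma,
    ← finsum_eq_sum_of_fintype]
  exact finsum_set_coe_eq_finsum_mem (f := fun b => Nat.card {a // f a = b}) S

section CentralTranslation

variable {G : Type*} [Group G]

theorem conj_mul_of_mem_center {z : G} (hz : z ∈ Subgroup.center G) (c x : G) :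
    c * (z * x) * c⁻¹ = z * (c * x * c⁻¹) := by
  rw [← mul_assoc, Subgroup.mem_center_iff.mp hz c]
  simp only [mul_assoc]

theorem isConj_mul_left_iff_of_mem_center {z : G} (hz : z ∈ Subgroup.center G) {a b : G} :
    IsConj (z * a) (z * b) ↔ IsConj a b := by
  simp only [isConj_iff, conj_mul_of_mem_center hz, mul_right_inj]

theorem ConjClasses.carrier_injective : Function.Injective (ConjClasses.carrier (α := G)) := by
  intro K L h
  obtain ⟨a, rfl⟩ := ConjClasses.mk_surjective K
  exact ConjClasses.mem_carrier_iff_mk_eq.mp (h ▸ ConjClasses.mem_carrier_mk)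

theorem ConjClasses.smul_carrier_mk_of_mem_center {z : G} (hz : z ∈ Subgroup.center G) (g : G) :
    z • (ConjClasses.mk g).carrier = (ConjClasses.mk (z * g)).carrier := by
  ext x
  rw [Set.mem_smul_set_iff_inv_smul_mem, smul_eq_mul, ConjClasses.mem_carrier_iff_mk_eq,
    ConjClasses.mem_carrier_iff_mk_eq, ConjClasses.mk_eq_mk_iff_isConj,
    ConjClasses.mk_eq_mk_iff_isConj, ← isConj_mul_left_iff_of_mem_center hz, mul_inv_cancel_left]

end CentralTranslation

section Annihilator

variable {G : Type*} [Group G] {Z : Subgroup G}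

theorem mem_annZ_mk_iff (hZ : Z ≤ Subgroup.center G) (z : Z) (g : G) :
    z ∈ annZ Z (ConjClasses.mk g) ↔ IsConj ((z : G) * g) g := by
  rw [annZ, Subgroup.mem_comap, MulAction.mem_stabilizer_iff, Subgroup.coe_subtype,
    ConjClasses.smul_carrier_mk_of_mem_center (hZ z.2), ConjClasses.carrier_injective.eq_iff,
    ConjClasses.mk_eq_mk_iff_isConj]

variable (Z) in
/-- Translation by `Z` on all of `ConjClasses G`; `zSetoid Z P` is definitionally its restriction
to `{K // P K}`. -/
def zOrbitRel : Setoid (ConjClasses G) :=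
  (zSetoid Z fun _ => True).comap fun K => ⟨K, trivial⟩

theorem zOrbitRel_mk_iff (hZ : Z ≤ Subgroup.center G) (a b : G) :
    zOrbitRel Z (ConjClasses.mk a) (ConjClasses.mk b) ↔ ∃ z ∈ Z, IsConj (z * a) b :=
  exists_congr fun _ => and_congr_right fun hz => by
    rw [ConjClasses.smul_carrier_mk_of_mem_center (hZ hz), ConjClasses.carrier_injective.eq_iff,
      ConjClasses.mk_eq_mk_iff_isConj]

theorem annZ_eq_of_zOrbitRel (hZ : Z ≤ Subgroup.center G) {K L : ConjClasses G}
    (h : zOrbitRel Z K L) : annZ Z K = annZ Z L := by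
  obtain ⟨a, rfl⟩ := ConjClasses.mk_surjective K
  obtain ⟨b, rfl⟩ := ConjClasses.mk_surjective L
  obtain ⟨z, hz, hab⟩ := (zOrbitRel_mk_iff hZ a b).mp h
  rw [← ConjClasses.mk_eq_mk_iff_isConj.mpr hab]
  ext w
  rw [mem_annZ_mk_iff hZ, mem_annZ_mk_iff hZ, ← mul_assoc,
    Subgroup.mem_center_iff.mp (hZ hz) w, mul_assoc, isConj_mul_left_iff_of_mem_center (hZ hz)]

def annZOrbit (hZ : Z ≤ Subgroup.center G) : Quotient (zOrbitRel Z) → Subgroup Z :=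
  Quotient.lift (annZ Z) fun _ _ => annZ_eq_of_zOrbitRel hZ

theorem card_quotient_zSetoid_annZ (hZ : Z ≤ Subgroup.center G) (P : Subgroup Z → Prop) :
    Nat.card (Quotient (zSetoid Z fun K => P (annZ Z K))) =
      Nat.card {q // P (annZOrbit hZ q)} :=
  (Nat.card_congr (Equiv.subtypeQuotientEquivQuotientSubtype (fun K => P (annZ Z K))
    (fun q => P (annZOrbit hZ q)) (fun _ => Iff.rfl) fun _ _ => Iff.rfl)).symm

theorem finsum_nIGZ_le_eq_card_quotient [Finite G] (hZ : Z ≤ Subgroup.center G) (N : Subgroup Z) :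
    ∑ᶠ X ∈ {X : Subgroup Z | X ≤ N}, nIGZ G Z X =
      Nat.card (Quotient (zSetoid Z fun K => annZ Z K ≤ N)) := by
  rw [card_quotient_zSetoid_annZ hZ (· ≤ N)]
  refine Eq.trans ?_ (Nat.card_subtype_mem_eq_finsum (annZOrbit hZ) {X | X ≤ N}).symm
  exact finsum_congr fun X => finsum_congr fun _ => card_quotient_zSetoid_annZ hZ (· = X)

end Annihilator

section QuotientByCentral

variable {G : Type*} [Group G]

theorem QuotientGroup.isConj_mk'_iff_of_le_center {M : Subgroup G} [M.Normal]
    (hM : M ≤ Subgroup.center G) (a b : G) :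
    IsConj (QuotientGroup.mk' M a) (QuotientGroup.mk' M b) ↔ ∃ m ∈ M, IsConj (m * a) b := by
  constructor
  · intro h
    obtain ⟨c', hc⟩ := isConj_iff.mp h
    obtain ⟨c, rfl⟩ := QuotientGroup.mk'_surjective M c'
    rw [← map_inv, ← map_mul, ← map_mul, QuotientGroup.mk'_eq_mk'] at hc
    obtain ⟨m, hm, hcm⟩ := hc
    refine ⟨m, hm, isConj_iff.mpr ⟨c, ?_⟩⟩
    rw [← hcm, conj_mul_of_mem_center (hM hm), Subgroup.mem_center_iff.mp (hM hm)]
  · rintro ⟨m, hm, h⟩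
    have hm1 : QuotientGroup.mk' M m = 1 := (QuotientGroup.eq_one_iff m).mpr hm
    have hmab := (QuotientGroup.mk' M).map_isConj h
    rwa [map_mul, hm1, one_mul] at hmab

theorem Subgroup.map_le_center_of_surjective {H : Type*} [Group H] {f : G →* H}
    (hf : Function.Surjective f) {Z : Subgroup G} (hZ : Z ≤ Subgroup.center G) :
    Z.map f ≤ Subgroup.center H := by
  rintro _ ⟨z, hz, rfl⟩
  rw [Subgroup.mem_center_iff]
  intro y
  obtain ⟨x, rfl⟩ := hf y
  rw [← map_mul, ← map_mul, Subgroup.mem_center_iff.mp (hZ hz) x]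

variable {Z : Subgroup G} (N : Subgroup Z) [(N.map Z.subtype).Normal]

local notation "π" => QuotientGroup.mk' (N.map Z.subtype)

theorem isConj_mk'_map_subtype_iff (hZ : Z ≤ Subgroup.center G) (a b : G) :
    IsConj (π a) (π b) ↔ ∃ n ∈ N, IsConj ((n : G) * a) b := by
  rw [QuotientGroup.isConj_mk'_iff_of_le_center (by rintro _ ⟨n, -, rfl⟩; exact hZ n.2)]
  simp [Subgroup.mem_map]

theorem map_mk'_le_center (hZ : Z ≤ Subgroup.center G) :
    Z.map π ≤ Subgroup.center (G ⧸ N.map Z.subtype) :=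
  Subgroup.map_le_center_of_surjective (QuotientGroup.mk'_surjective _) hZ

theorem zOrbitRel_map_mk'_iff (hZ : Z ≤ Subgroup.center G) (K L : ConjClasses G) :
    zOrbitRel (Z.map π) (ConjClasses.map π K) (ConjClasses.map π L) ↔ zOrbitRel Z K L := by
  obtain ⟨a, rfl⟩ := ConjClasses.mk_surjective K
  obtain ⟨b, rfl⟩ := ConjClasses.mk_surjective L
  change zOrbitRel _ (ConjClasses.mk (π a)) (ConjClasses.mk (π b)) ↔ _
  rw [zOrbitRel_mk_iff (map_mk'_le_center N hZ), zOrbitRel_mk_iff hZ]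
  constructor
  · rintro ⟨_, ⟨z, hz, rfl⟩, h⟩
    rw [← map_mul, isConj_mk'_map_subtype_iff N hZ] at h
    obtain ⟨n, -, h⟩ := h
    exact ⟨n * z, mul_mem n.2 hz, by rwa [mul_assoc]⟩
  · rintro ⟨z, hz, h⟩
    exact ⟨π z, ⟨z, hz, rfl⟩, by rw [← map_mul]; exact (π).map_isConj h⟩

theorem comap_annZ_map_mk' (hZ : Z ≤ Subgroup.center G) (g : G) :
    (annZ (Z.map π) (ConjClasses.mk (π g))).comap (MonoidHom.subgroupMap π Z) =
      N ⊔ annZ Z (ConjClasses.mk g) := by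
  have : N.Normal := .of_map_subtype ‹_›
  ext z
  rw [Subgroup.mem_comap, mem_annZ_mk_iff (map_mk'_le_center N hZ),
    Subgroup.mem_sup_of_normal_left]
  change IsConj (π z * π g) (π g) ↔ _
  rw [← map_mul, isConj_mk'_map_subtype_iff N hZ]
  constructor
  · rintro ⟨n, hn, h⟩
    refine ⟨n⁻¹, inv_mem hn, n * z, (mem_annZ_mk_iff hZ _ _).mpr ?_, inv_mul_cancel_left n z⟩
    rwa [Subgroup.coe_mul, mul_assoc]
  · rintro ⟨n, hn, w, hw, rfl⟩
    refine ⟨n⁻¹, inv_mem hn, ?_⟩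
    rw [mem_annZ_mk_iff hZ] at hw
    simpa [mul_assoc] using hw

theorem ker_subgroupMap_mk' : (MonoidHom.subgroupMap π Z).ker = N := by
  rw [Subgroup.ker_subgroupMap, QuotientGroup.ker_mk', ← Subgroup.comap_subtype,
    Subgroup.comap_map_eq_self_of_injective Z.subtype_injective]

theorem annZ_map_mk'_eq_bot_iff (hZ : Z ≤ Subgroup.center G) (g : G) :
    annZ (Z.map π) (ConjClasses.mk (π g)) = ⊥ ↔ annZ Z (ConjClasses.mk g) ≤ N := by
  rw [← (Subgroup.comap_injective (MonoidHom.subgroupMap_surjective π Z)).eq_iff,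
    comap_annZ_map_mk' N hZ, MonoidHom.comap_bot, ker_subgroupMap_mk' N, sup_eq_left]

noncomputable def zOrbitQuotientEquiv (hZ : Z ≤ Subgroup.center G) :
    Quotient (zOrbitRel Z) ≃ Quotient (zOrbitRel (Z.map π)) :=
  Equiv.ofBijective
    (Quotient.map (ConjClasses.map π) fun K L => (zOrbitRel_map_mk'_iff N hZ K L).mpr)
    ⟨fun q q' => Quotient.inductionOn₂ q q' fun K L h =>
        Quotient.sound ((zOrbitRel_map_mk'_iff N hZ K L).mp (Quotient.exact h)),
      fun q' => Quotient.inductionOn q' fun K' => by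
        obtain ⟨K, rfl⟩ := ConjClasses.map_surjective (QuotientGroup.mk'_surjective _) K'
        exact ⟨⟦K⟧, rfl⟩⟩

theorem card_quotient_zSetoid_annZ_le_eq_nIGZ_bot (hZ : Z ≤ Subgroup.center G) :
    Nat.card (Quotient (zSetoid Z fun K => annZ Z K ≤ N)) =
      nIGZ (G ⧸ N.map Z.subtype) (Z.map π) ⊥ := by
  rw [card_quotient_zSetoid_annZ hZ (· ≤ N), nIGZ,
    card_quotient_zSetoid_annZ (map_mk'_le_center N hZ) (· = ⊥)]
  refine Nat.card_congr ((zOrbitQuotientEquiv N hZ).subtypeEquiv fun q => ?_)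
  induction q using Quotient.inductionOn with | h K => ?_
  obtain ⟨g, rfl⟩ := ConjClasses.mk_surjective K
  exact (annZ_map_mk'_eq_bot_iff N hZ g).symm

end QuotientByCentral

/-- `∑_{X ≤ N} |I(G:Z)_X| = |I(G/N : Z/N)_{1}|`. -/
theorem stmt7 (G : Type*) [Group G] [Finite G] (Z : Subgroup G)
    (hZ : Z ≤ Subgroup.center G) (N : Subgroup ↥Z)
    [hN : (N.map Z.subtype).Normal] :
    ∑ᶠ X ∈ {X : Subgroup ↥Z | X ≤ N}, nIGZ G Z X =
      nIGZ (G ⧸ N.map Z.subtype)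
        (Z.map (QuotientGroup.mk' (N.map Z.subtype))) ⊥ := by
  rw [finsum_nIGZ_le_eq_card_quotient hZ N]
  exact card_quotient_zSetoid_annZ_le_eq_nIGZ_bot N hZ
end

section
/- Let G be a finite group, Z ≤ Z(G), and φ ∈ Irr(Z) with kernel N. Then c_φ(G) = c_{φ̄}(G/N), where φ̄ is the faithful character of Z/N induced by φ; here c_φ(G) = ∏_{X ≤ N} ∏_{i ∈ I(G:Z)_X} |C_G(g_i)|·|Z/X|^{-1}. -/
open scoped Pointwise BigOperators

set_option synthInstance.maxHeartbeats 1000000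
set_option maxHeartbeats 1000000

/-!
Let `f : G → G/N` with `N = ker φ ≤ Z`. Because `N` is central, translating a conjugacy class
`K` by `Z` commutes with `f`, and `Ann_{Z/N}(f K) = f (Ann_Z K)`. Hence `K ↦ f K` induces a
bijection between the two index sets (`Ann_Z K ≤ N` iff `Ann_{Z/N}(f K) ≤ ker φ̄`, and then
`Ann_{Z/N}(f K)` is trivial). By the class equation the factor of `K` is
`|G| |Ann_Z K| / (|Z| |K|)`. When `Ann_Z K ≤ N`, the fibres of `f` on `K` are the cosets of
`Ann_Z K`, so `|K| = |Ann_Z K| |f K|`; with `|G| = |N| |G/N|` and `|Z| = |N| |Z/N|` this is the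
factor `|G/N| / (|Z/N| |f K|)` of `f K`.
-/

open Function

theorem Set.natCard_image_eq_of_forall_eq_iff {α β γ : Type*} {f : α → β} {g : α → γ}
    {s : Set α} (h : ∀ x ∈ s, ∀ y ∈ s, f x = f y ↔ g x = g y) :
    Nat.card (f '' s) = Nat.card (g '' s) := by
  have hker : Setoid.ker (fun x : s => f x) = Setoid.ker (fun x : s => g x) :=
    Setoid.ext fun x y => h x x.2 y y.2
  rw [Set.image_eq_range, Set.image_eq_range,
    ← Nat.card_congr (Setoid.quotientKerEquivRange _), hker,
    Nat.card_congr (Setoid.quotientKerEquivRange _)]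

theorem Subgroup.natCard_eq_card_mul_natCard_image {G Y : Type*} [Group G] (A : Subgroup G)
    {s : Set G} (p : G → Y) (hs : ∀ x ∈ s, ∀ a ∈ A, x * a ∈ s)
    (hp : ∀ x ∈ s, ∀ y ∈ s, p x = p y ↔ x⁻¹ * y ∈ A) :
    Nat.card s = Nat.card A * Nat.card (p '' s) := by
  have hsA : s * (A : Set G) = s :=
    (Set.mul_subset_iff.2 fun x hx a ha => hs x hx a ha).antisymm
      fun x hx => ⟨x, hx, 1, A.one_mem, mul_one x⟩
  calc Nat.card s = Nat.card ↥(s * (A : Set G)) := by rw [hsA]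
    _ = Nat.card A * Nat.card ((↑) '' s : Set (G ⧸ A)) :=
      A.card_mul_eq_card_subgroup_mul_card_quotient s
    _ = Nat.card A * Nat.card (p '' s) := by
      rw [Set.natCard_image_eq_of_forall_eq_iff fun x hx y hy =>
        QuotientGroup.eq.trans (hp x hx y hy).symm]

theorem Subgroup.card_eq_card_ker_mul_card_map {G H : Type*} [Group G] [Group H] (f : G →* H)
    {Z : Subgroup G} (hker : f.ker ≤ Z) : Nat.card Z = Nat.card f.ker * Nat.card (Z.map f) :=
  f.ker.natCard_eq_card_mul_natCard_image (s := Z) f (fun _ hx _ ha => Z.mul_mem hx (hker ha))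
    fun _ _ _ _ => by rw [eq_comm, f.eq_iff]

theorem MonoidHom.map_mem_center {G H : Type*} [Group G] [Group H] {f : G →* H}
    (hf : Surjective f) {z : G} (hz : z ∈ Subgroup.center G) : f z ∈ Subgroup.center H := by
  rw [Subgroup.mem_center_iff]
  intro h
  obtain ⟨g, rfl⟩ := hf h
  rw [← map_mul, ← map_mul, Subgroup.mem_center_iff.1 hz g]

namespace ConjClasses

variable {G H : Type*} [Group G] [Group H]

theorem card_centralizer_mul_card_carrier (g : G) :
    Nat.card (Subgroup.centralizer {g}) * Nat.card (ConjClasses.mk g).carrier = Nat.card G := by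
  rw [Subgroup.nat_card_centralizer_nat_card_stabilizer, ← ConjAct.orbit_eq_carrier_conjClasses,
    Nat.card_coe_set_eq, ← MulAction.index_stabilizer, Subgroup.card_mul_index]
  rfl

theorem smul_carrier_mk {z : G} (hz : z ∈ Subgroup.center G) (g : G) :
    z • (ConjClasses.mk g).carrier = (ConjClasses.mk (z * g)).carrier := by
  ext x
  simp only [Set.mem_smul_set_iff_inv_smul_mem, smul_eq_mul, mem_carrier_iff_mk_eq,
    mk_eq_mk_iff_isConj, isConj_iff]
  have hcz : ∀ c : G, c * z⁻¹ = z⁻¹ * c := Subgroup.mem_center_iff.1 (inv_mem hz)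
  refine exists_congr fun c => ?_
  rw [← mul_assoc c, hcz, mul_assoc, mul_assoc, inv_mul_eq_iff_eq_mul, ← mul_assoc]

theorem smul_carrier_eq_iff {z g : G} (hz : z ∈ Subgroup.center G) {K L : ConjClasses G}
    (hg : g ∈ K.carrier) : z • K.carrier = L.carrier ↔ z * g ∈ L.carrier := by
  rw [← mem_carrier_iff_mk_eq.1 hg, smul_carrier_mk hz, mem_carrier_iff_mk_eq]
  exact ⟨fun h => mem_carrier_iff_mk_eq.1 (h ▸ mem_carrier_mk), fun h => h ▸ rfl⟩

theorem carrier_map {f : G →* H} (hf : Surjective f) (K : ConjClasses G) :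
    (ConjClasses.map f K).carrier = f '' K.carrier := by
  obtain ⟨g, rfl⟩ := mk_surjective K
  ext y
  obtain ⟨x, rfl⟩ := hf y
  change f x ∈ (ConjClasses.mk (f g)).carrier ↔ _
  simp only [mem_carrier_iff_mk_eq, mk_eq_mk_iff_isConj, Set.mem_image]
  constructor
  · intro hx
    obtain ⟨c, hc⟩ := isConj_iff.1 hx
    obtain ⟨d, rfl⟩ := hf c
    refine ⟨d⁻¹ * g * d, isConj_iff.2 ⟨d, by group⟩, ?_⟩
    rw [map_mul, map_mul, map_inv, ← hc]
    group
  · rintro ⟨y, hy, hfy⟩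
    rw [← hfy]
    exact f.map_isConj hy

end ConjClasses

section CentralTranslates

open ConjClasses

variable {G H : Type*} [Group G] [Group H] {Z : Subgroup G}

theorem mem_annZ_iff (hZ : Z ≤ Subgroup.center G) {z : Z} {g : G} {K : ConjClasses G}
    (hg : g ∈ K.carrier) : z ∈ annZ Z K ↔ (z : G) * g ∈ K.carrier :=
  smul_carrier_eq_iff (hZ z.2) hg

theorem annZ_eq_of_smul_carrier_eq (hZ : Z ≤ Subgroup.center G) {z : G} (hz : z ∈ Z)
    {K L : ConjClasses G} (h : z • K.carrier = L.carrier) : annZ Z K = annZ Z L := by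
  ext a
  change (a : G) • K.carrier = K.carrier ↔ (a : G) • L.carrier = L.carrier
  rw [← h, smul_smul, Subgroup.mem_center_iff.1 (hZ hz) a, ← smul_smul,
    (MulAction.injective z).eq_iff]

variable {f : G →* H} (hf : Surjective f) (hZ : Z ≤ Subgroup.center G) (hkerZ : f.ker ≤ Z)
include hf hZ hkerZ

theorem smul_carrier_map_eq_iff {z : G} (hz : z ∈ Z) (K L : ConjClasses G) :
    f z • (ConjClasses.map f K).carrier = (ConjClasses.map f L).carrier ↔
      ∃ z' ∈ Z, f z' = f z ∧ z' • K.carrier = L.carrier := by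
  obtain ⟨g, rfl⟩ := mk_surjective K
  have hfg : f g ∈ (ConjClasses.map f (ConjClasses.mk g)).carrier := mem_carrier_mk
  rw [smul_carrier_eq_iff (f.map_mem_center hf (hZ hz)) hfg, carrier_map hf, ← map_mul]
  constructor
  · rintro ⟨y, hy, hfy⟩
    have hn : y * (z * g)⁻¹ ∈ f.ker := by
      rw [MonoidHom.mem_ker, map_mul, map_inv, hfy, mul_inv_cancel]
    refine ⟨y * (z * g)⁻¹ * z, Z.mul_mem (hkerZ hn) hz, ?_, ?_⟩
    · rw [map_mul, MonoidHom.mem_ker.1 hn, one_mul]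
    · rw [smul_carrier_eq_iff (hZ (Z.mul_mem (hkerZ hn) hz)) mem_carrier_mk]
      simpa [mul_assoc] using hy
  · rintro ⟨z', hz', hfz, h⟩
    exact ⟨z' * g, (smul_carrier_eq_iff (hZ hz') mem_carrier_mk).1 h, by
      rw [map_mul, map_mul, hfz]⟩

theorem annZ_map (K : ConjClasses G) :
    annZ (Z.map f) (ConjClasses.map f K) = (annZ Z K).map (f.subgroupMap Z) := by
  ext ⟨w, z, hz, rfl⟩
  change f z • _ = _ ↔ _
  rw [smul_carrier_map_eq_iff hf hZ hkerZ hz, Subgroup.mem_map]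
  constructor
  · rintro ⟨z', hz', hfz, h⟩
    exact ⟨⟨z', hz'⟩, h, Subtype.ext hfz⟩
  · rintro ⟨⟨z', hz'⟩, h, hfz⟩
    exact ⟨z', hz', congrArg Subtype.val hfz, h⟩

theorem exists_smul_carrier_map_eq_iff (K L : ConjClasses G) :
    (∃ w ∈ Z.map f, w • (ConjClasses.map f K).carrier = (ConjClasses.map f L).carrier) ↔
      ∃ z ∈ Z, z • K.carrier = L.carrier := by
  constructor
  · rintro ⟨_, ⟨z, hz, rfl⟩, h⟩
    obtain ⟨z', hz', -, h'⟩ := (smul_carrier_map_eq_iff hf hZ hkerZ hz K L).1 h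
    exact ⟨z', hz', h'⟩
  · rintro ⟨z, hz, h⟩
    exact ⟨f z, Subgroup.mem_map_of_mem f hz,
      (smul_carrier_map_eq_iff hf hZ hkerZ hz K L).2 ⟨z, hz, rfl, h⟩⟩

end CentralTranslates

noncomputable def cPhiFactor {G : Type*} [Group G] (Z : Subgroup G) (K : ConjClasses G) : ℚ :=
  (Nat.card (Subgroup.centralizer {Quotient.out K} : Subgroup G) : ℚ) / ((annZ Z K).index : ℚ)

section CPhiFactor

open ConjClasses

variable {G H : Type*} [Group G] [Group H] {Z : Subgroup G} {f : G →* H}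

theorem card_carrier_eq_card_annZ_mul (hZ : Z ≤ Subgroup.center G) (hkerZ : f.ker ≤ Z)
    {K : ConjClasses G} (hK : annZ Z K ≤ (f.subgroupMap Z).ker) :
    Nat.card K.carrier = Nat.card (annZ Z K) * Nat.card (f '' K.carrier) := by
  rw [← Subgroup.card_subtype Z (annZ Z K)]
  refine Subgroup.natCard_eq_card_mul_natCard_image _ f ?_ fun x hx y hy => ?_
  · rintro x hx _ ⟨a, ha, rfl⟩
    rw [Subgroup.coe_subtype, Subgroup.mem_center_iff.1 (hZ a.2) x]
    exact (mem_annZ_iff hZ hx).1 ha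
  · rw [eq_comm, f.eq_iff]
    constructor
    · intro hn
      refine ⟨⟨_, hkerZ hn⟩, (mem_annZ_iff hZ hx).2 ?_, rfl⟩
      rw [← Subgroup.mem_center_iff.1 (hZ (hkerZ hn)) x, mul_inv_cancel_left]
      exact hy
    · rintro ⟨a, ha, hax⟩
      rw [← hax]
      exact congrArg Subtype.val (hK ha)

variable [Finite G]

theorem cPhiFactor_eq (Z : Subgroup G) (K : ConjClasses G) :
    cPhiFactor Z K =
      Nat.card G * Nat.card (annZ Z K) / (Nat.card Z * Nat.card K.carrier) := by
  have hclass := card_centralizer_mul_card_carrier (Quotient.out K)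
  have hmk : ConjClasses.mk (Quotient.out K) = K := Quotient.out_eq K
  rw [hmk] at hclass
  have hK : (Nat.card K.carrier : ℚ) ≠ 0 := by
    have : Nonempty K.carrier := ⟨⟨_, hmk ▸ mem_carrier_mk⟩⟩
    exact_mod_cast Nat.card_pos.ne'
  have hA : (Nat.card (annZ Z K) : ℚ) ≠ 0 := by exact_mod_cast Nat.card_pos.ne'
  rw [cPhiFactor, ← hclass, ← (annZ Z K).card_mul_index]
  push_cast
  field_simp

theorem cPhiFactor_eq_of_smul_carrier_eq (hZ : Z ≤ Subgroup.center G) {z : G} (hz : z ∈ Z)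
    {K L : ConjClasses G} (h : z • K.carrier = L.carrier) : cPhiFactor Z K = cPhiFactor Z L := by
  rw [cPhiFactor_eq, cPhiFactor_eq, annZ_eq_of_smul_carrier_eq hZ hz h, ← h,
    Set.natCard_smul_set]

theorem cPhiFactor_map (hf : Surjective f) (hZ : Z ≤ Subgroup.center G) (hkerZ : f.ker ≤ Z)
    {K : ConjClasses G} (hK : annZ Z K ≤ (f.subgroupMap Z).ker) :
    cPhiFactor (Z.map f) (ConjClasses.map f K) = cPhiFactor Z K := by
  have : Finite H := Finite.of_surjective f hf
  have hbot : annZ (Z.map f) (ConjClasses.map f K) = ⊥ := by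
    rw [annZ_map hf hZ hkerZ, Subgroup.map_eq_bot_iff]
    exact hK
  have hG : Nat.card G = Nat.card f.ker * Nat.card H := by
    rw [← Subgroup.card_top (G := G), Subgroup.card_eq_card_ker_mul_card_map f le_top,
      ← MonoidHom.range_eq_map, f.range_eq_top.2 hf, Subgroup.card_top]
  have hN : (Nat.card f.ker : ℚ) ≠ 0 := by exact_mod_cast Nat.card_pos.ne'
  have hA : (Nat.card (annZ Z K) : ℚ) ≠ 0 := by exact_mod_cast Nat.card_pos.ne'
  rw [cPhiFactor_eq, cPhiFactor_eq, hbot, Subgroup.card_bot, carrier_map hf,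
    card_carrier_eq_card_annZ_mul hZ hkerZ hK, hG, Subgroup.card_eq_card_ker_mul_card_map f hkerZ]
  push_cast
  field_simp

end CPhiFactor

theorem cPhi_eq_cPhi_map {G H : Type*} [Group G] [Group H] [Finite G] {Z : Subgroup G}
    (hZ : Z ≤ Subgroup.center G) {φ : Z →* ℂˣ} {f : G →* H} (hf : Surjective f)
    (hker : f.ker = φ.ker.map Z.subtype) {ψ : Z.map f →* ℂˣ}
    (hψ : ψ.comp (f.subgroupMap Z) = φ) : cPhi G Z φ = cPhi H (Z.map f) ψ := by
  have : Finite H := Finite.of_surjective f hf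
  have hkerZ : f.ker ≤ Z := hker ▸ Subgroup.map_subtype_le _
  have hkerφ : (f.subgroupMap Z).ker = φ.ker := by
    rw [Subgroup.ker_subgroupMap, hker, ← Subgroup.comap_subtype,
      Subgroup.comap_map_eq_self_of_injective Z.subtype_injective]
  have hZf : Z.map f ≤ Subgroup.center H := by
    rintro _ ⟨z, hz, rfl⟩
    exact f.map_mem_center hf (hZ hz)
  have hcond (K : ConjClasses G) :
      annZ Z K ≤ φ.ker ↔ annZ (Z.map f) (ConjClasses.map f K) ≤ ψ.ker := by
    rw [annZ_map hf hZ hkerZ, Subgroup.map_le_iff_le_comap, MonoidHom.comap_ker, hψ]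
  let e : RepIdx G Z φ → RepIdx H (Z.map f) ψ :=
    Quotient.map' (fun K => ⟨ConjClasses.map f K.1, (hcond K.1).1 K.2⟩)
      fun K L => (exists_smul_carrier_map_eq_iff hf hZ hkerZ K.1 L.1).2
  have he : Bijective e := by
    refine ⟨fun a b hab => ?_, fun b => ?_⟩
    · induction a, b using Quotient.inductionOn₂' with
      | h K L =>
        exact Quotient.sound' ((exists_smul_carrier_map_eq_iff hf hZ hkerZ K.1 L.1).1
          (Quotient.exact' hab))
    · induction b using Quotient.inductionOn' with
      | h L =>
        obtain ⟨K, hK⟩ := ConjClasses.map_surjective hf L.1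
        exact ⟨Quotient.mk'' ⟨K, (hcond K).2 (hK ▸ L.2)⟩, congrArg _ (Subtype.ext hK)⟩
  refine finprod_eq_of_bijective e he fun o => ?_
  change cPhiFactor Z (repClass o) = cPhiFactor (Z.map f) (repClass (e o))
  obtain ⟨w, hw, hwL⟩ : ∃ w ∈ Z.map f,
      w • (repClass (e o)).carrier = (ConjClasses.map f (repClass o)).carrier := by
    have heo : e o =
        Quotient.mk'' ⟨ConjClasses.map f (repClass o), (hcond _).1 (Quotient.out o).2⟩ := by
      conv_lhs => rw [← Quotient.out_eq' o]
      rfl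
    exact Quotient.exact' ((Quotient.out_eq' (e o)).trans heo)
  rw [cPhiFactor_eq_of_smul_carrier_eq hZf hw hwL,
    cPhiFactor_map hf hZ hkerZ (hkerφ ▸ (Quotient.out o).2)]

/-- `c_φ(G) = c_φ̄(G/N)` where `N = ker φ`. -/
theorem stmt11 (G : Type*) [Group G] [Finite G] (Z : Subgroup G)
    (hZ : Z ≤ Subgroup.center G) (φ : ↥Z →* ℂˣ)
    [hN : ((φ.ker).map Z.subtype).Normal]
    (φbar : ↥(Z.map (QuotientGroup.mk' (φ.ker.map Z.subtype))) →* ℂˣ)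
    (hφbar : ∀ (z : ↥Z) (w : ↥(Z.map (QuotientGroup.mk' (φ.ker.map Z.subtype)))),
      (w : G ⧸ φ.ker.map Z.subtype) = QuotientGroup.mk (z : G) → φbar w = φ z) :
    cPhi G Z φ =
      cPhi (G ⧸ φ.ker.map Z.subtype)
        (Z.map (QuotientGroup.mk' (φ.ker.map Z.subtype))) φbar :=
  cPhi_eq_cPhi_map hZ (QuotientGroup.mk'_surjective _) (QuotientGroup.ker_mk' _)
    (MonoidHom.ext fun z => hφbar z _ rfl)
end

section
/- Let A be a finite abelian group and Z ≤ A a subgroup. For every φ ∈ Irr(Z), μ_φ(A) = 1; in particular γ_φ(A) = c_φ(A) = |A/Z|^{|A/Z|}. -/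
open scoped Pointwise BigOperators

set_option synthInstance.maxHeartbeats 1000000
set_option maxHeartbeats 1000000

/-! In an abelian group every conjugacy class is a singleton `{g}`. Hence `Ann_Z(K)` is trivial,
the index set of `B(A)_φ` is `A ⧸ Z`, and every centralizer is `A`, which gives
`c_φ(A) = (|A| / |Z|) ^ |A/Z|`. As `ℂA` is commutative, the trace form is
`⟨u|v⟩ = |A| ∑ₐ conj(u a) v a`. The element `e_φ [g]` is supported on the coset `gZ`, with
coefficients of modulus `1 / |Z|`, so the Gramian is diagonal with entries
`|A| · |Z| · |Z|⁻² = |A/Z|`. -/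

namespace MonoidAlgebra

variable {G : Type*} [Group G] [Fintype G]

theorem trace_mulLeft {k : Type*} [CommRing k] (x : MonoidAlgebra k G) :
    LinearMap.trace k (MonoidAlgebra k G) (LinearMap.mulLeft k x) = Fintype.card G * x.coeff 1 := by
  classical
  have hdiag : ∀ g : G, (LinearMap.toMatrix (basis G k) (basis G k)
      (LinearMap.mulLeft k x)).diag g = x.coeff 1 := fun g => by
    rw [Matrix.diag_apply, LinearMap.toMatrix_apply, basis_apply, LinearMap.mulLeft_apply]
    change (x * single g 1).coeff g = _
    rw [coeff_mul_single_apply, mul_inv_cancel, mul_one]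
  rw [LinearMap.trace_eq_matrix_trace k (basis G k), Matrix.trace, Finset.sum_congr rfl
    fun g _ => hdiag g, Finset.sum_const, Finset.card_univ, nsmul_eq_mul]

theorem coeff_gaStar_mul_one (u v : MonoidAlgebra ℂ G) :
    (gaStar u * v).coeff 1 = ∑ g : G, starRingEnd ℂ (u.coeff g) * v.coeff g := by
  rw [gaStar, finsum_eq_sum_of_fintype, Finset.sum_mul, coeff_sum, Finsupp.finsetSum_apply]
  refine Finset.sum_congr rfl fun g _ => ?_
  rw [coeff_single_mul_apply, inv_inv, mul_one]

end MonoidAlgebra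

open MonoidAlgebra

section Hform

variable {A : Type*} [CommGroup A] [Fintype A]

theorem trace_centerMulHom (x : MonoidAlgebra ℂ A) :
    LinearMap.trace ℂ _ (centerMulHom x) = Fintype.card A * x.coeff 1 := by
  have htop : Subalgebra.center ℂ (MonoidAlgebra ℂ A) = ⊤ := Subalgebra.center_eq_top ℂ _
  have hx : x ∈ Subalgebra.center ℂ (MonoidAlgebra ℂ A) := htop ▸ Algebra.mem_top
  let e : Subalgebra.center ℂ (MonoidAlgebra ℂ A) ≃ₗ[ℂ] MonoidAlgebra ℂ A :=
    ((Subalgebra.equivOfEq _ _ htop).trans Subalgebra.topEquiv).toLinearEquiv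
  have hconj : centerMulHom x = e.symm.conj (LinearMap.mulLeft ℂ x) := by
    rw [centerMulHom, dif_pos hx]
    exact LinearMap.ext fun v => e.injective rfl
  rw [hconj, LinearMap.trace_conj', trace_mulLeft]

theorem hform_eq_sum (u v : MonoidAlgebra ℂ A) :
    hform u v = Fintype.card A * ∑ a : A, starRingEnd ℂ (u.coeff a) * v.coeff a := by
  rw [hform, trace_centerMulHom, coeff_gaStar_mul_one]

end Hform

section Ephi

variable {G : Type*} [Group G] [Finite G] (Z : Subgroup G) (φ : Z →* ℂˣ)

theorem coeff_ephi_coe (z : Z) :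
    (ephi Z φ).coeff z = (Nat.card Z : ℂ)⁻¹ * starRingEnd ℂ (φ z) := by
  have : Fintype Z := Fintype.ofFinite Z
  rw [ephi, finsum_eq_sum_of_fintype, coeff_smul, coeff_sum, Finsupp.smul_apply,
    Finsupp.finsetSum_apply, Finset.sum_eq_single z (fun y _ hy => ?_) (by simp)]
  · simp
  · rw [coeff_single, Finsupp.single_eq_of_ne' (Subtype.coe_injective.ne hy)]

theorem coeff_ephi_of_notMem {a : G} (ha : a ∉ Z) : (ephi Z φ).coeff a = 0 := by
  have : Fintype Z := Fintype.ofFinite Z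
  rw [ephi, finsum_eq_sum_of_fintype, coeff_smul, coeff_sum, Finsupp.smul_apply,
    Finsupp.finsetSum_apply, Finset.sum_eq_zero fun z _ => ?_, smul_zero]
  rw [coeff_single, Finsupp.single_eq_of_ne' (ne_of_mem_of_not_mem z.2 ha)]

theorem norm_coe_apply_of_finite (z : Z) : ‖(φ z : ℂ)‖ = 1 :=
  (((Units.coeHom ℂ).comp φ).isOfFinOrder (isOfFinOrder_of_finite z)).norm_eq_one

theorem sum_conj_mul_coeff_ephi [Fintype G] :
    ∑ a : G, starRingEnd ℂ ((ephi Z φ).coeff a) * (ephi Z φ).coeff a = (Nat.card Z : ℂ)⁻¹ := by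
  classical
  have hZ : ∀ z : Z, starRingEnd ℂ ((ephi Z φ).coeff z) * (ephi Z φ).coeff z =
      (Nat.card Z : ℂ)⁻¹ * (Nat.card Z : ℂ)⁻¹ := fun z => by
    rw [coeff_ephi_coe, map_mul, Complex.conj_conj, map_inv₀, map_natCast,
      mul_mul_mul_comm, Complex.mul_conj', norm_coe_apply_of_finite]
    simp
  have hcompl : ∀ a : {a // a ∉ Z},
      starRingEnd ℂ ((ephi Z φ).coeff a) * (ephi Z φ).coeff a = 0 := fun a => by
    rw [coeff_ephi_of_notMem Z φ a.2, mul_zero]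
  rw [← Fintype.sum_subtype_add_sum_subtype (· ∈ Z), Finset.sum_congr rfl fun z _ => hZ z,
    Finset.sum_congr rfl fun a _ => hcompl a, Finset.sum_const_zero, add_zero, Finset.sum_const,
    Finset.card_univ, ← Nat.card_eq_fintype_card, nsmul_eq_mul]
  exact mul_inv_cancel_left₀ (Nat.cast_ne_zero.2 Nat.card_pos.ne') _

end Ephi

section Gram

variable {A : Type*} [CommGroup A] [Fintype A] (Z : Subgroup A) (φ : Z →* ℂˣ)

theorem hform_ephi_mul_single_self (g : A) :
    hform (ephi Z φ * single g 1) (ephi Z φ * single g 1) = Z.index := by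
  have hshift : ∑ a : A, starRingEnd ℂ ((ephi Z φ * single g 1).coeff a) *
      (ephi Z φ * single g 1).coeff a =
      ∑ a : A, starRingEnd ℂ ((ephi Z φ).coeff a) * (ephi Z φ).coeff a :=
    Fintype.sum_equiv (Equiv.mulRight g⁻¹) _ _ fun a => by
      simp only [coeff_mul_single_apply, mul_one, Equiv.coe_mulRight]
  have hZ : (Nat.card Z : ℂ) ≠ 0 := Nat.cast_ne_zero.2 Nat.card_pos.ne'
  rw [hform_eq_sum, hshift, sum_conj_mul_coeff_ephi, ← Nat.card_eq_fintype_card,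
    ← Z.card_mul_index, Nat.cast_mul]
  field_simp

theorem hform_ephi_mul_single_of_ne {g h : A} (hgh : (g : A ⧸ Z) ≠ h) :
    hform (ephi Z φ * single g 1) (ephi Z φ * single h 1) = 0 := by
  rw [hform_eq_sum, Finset.sum_eq_zero fun a _ => ?_, mul_zero]
  simp only [coeff_mul_single_apply, mul_one]
  by_cases hg : a * g⁻¹ ∈ Z
  · have hh : a * h⁻¹ ∉ Z := fun hh => hgh <| QuotientGroup.eq_iff_div_mem.2 <| by
      simpa only [mul_div_mul_left_eq_div, inv_div_inv] using div_mem hh hg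
    rw [coeff_ephi_of_notMem Z φ hh, mul_zero]
  · rw [coeff_ephi_of_notMem Z φ hg, map_zero, zero_mul]

end Gram

theorem ConjClasses.mk_out {M : Type*} [Monoid M] (c : ConjClasses M) :
    ConjClasses.mk (Quotient.out c : M) = c := by
  rw [← ConjClasses.quotient_mk_eq_mk]
  exact Quotient.out_eq c

theorem ConjClasses.carrier_eq_singleton_out {M : Type*} [CommMonoid M] (c : ConjClasses M) :
    c.carrier = {(Quotient.out c : M)} := by
  ext x
  rw [ConjClasses.mem_carrier_iff_mk_eq, Set.mem_singleton_iff]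
  conv_lhs => rw [← c.mk_out]
  exact ConjClasses.mk_injective.eq_iff

section ZOrbits

variable {A : Type*} [CommGroup A] (Z : Subgroup A)

theorem classSum_eq_single (c : ConjClasses A) : classSum c = single (Quotient.out c) 1 := by
  rw [classSum, c.carrier_eq_singleton_out, finsum_mem_singleton]

theorem annZ_eq_bot (c : ConjClasses A) : annZ Z c = ⊥ := by
  ext z
  rw [annZ, Subgroup.mem_comap, MulAction.mem_stabilizer_iff, c.carrier_eq_singleton_out,
    Set.smul_set_singleton, Set.singleton_eq_singleton_iff, smul_eq_mul, mul_eq_right,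
    Subgroup.mem_bot, Subgroup.coe_subtype, OneMemClass.coe_eq_one]

theorem zSetoid_r_iff {P : ConjClasses A → Prop} (K L : {K // P K}) :
    (zSetoid Z P).r K L ↔ ((Quotient.out K.1 : A) : A ⧸ Z) = (Quotient.out L.1 : A) := by
  change (∃ z ∈ Z, z • K.1.carrier = L.1.carrier) ↔ _
  simp_rw [ConjClasses.carrier_eq_singleton_out, Set.smul_set_singleton,
    Set.singleton_eq_singleton_iff, smul_eq_mul, ← eq_mul_inv_iff_mul_eq, exists_eq_right,
    QuotientGroup.eq, mul_comm]

variable (φ : Z →* ℂˣ)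

noncomputable def repCoset (o : RepIdx A Z φ) : A ⧸ Z := (Quotient.out (repClass o) : A)

theorem repCoset_bijective : Function.Bijective (repCoset Z φ) := by
  refine ⟨fun o o' h => Quotient.out_equiv_out.1 ((zSetoid_r_iff Z _ _).2 h), fun q => ?_⟩
  induction q using QuotientGroup.induction_on with | H a => ?_
  let K : {K // annZ Z K ≤ φ.ker} := ⟨ConjClasses.mk a, (annZ_eq_bot Z _).trans_le bot_le⟩
  refine ⟨⟦K⟧, ((zSetoid_r_iff Z _ _).1 (Quotient.mk_out K)).trans ?_⟩
  rw [ConjClasses.mk_injective (ConjClasses.mk_out (ConjClasses.mk a))]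

theorem card_repIdx : Nat.card (RepIdx A Z φ) = Z.index :=
  (Nat.card_eq_of_bijective _ (repCoset_bijective Z φ)).trans Z.index_eq_card.symm

end ZOrbits

section Invariants

variable {A : Type*} [CommGroup A] [Finite A] (Z : Subgroup A) (φ : Z →* ℂˣ)

theorem hform_ephi_mul_classSum [DecidableEq (RepIdx A Z φ)] (i j : RepIdx A Z φ) :
    hform (ephi Z φ * classSum (repClass i)) (ephi Z φ * classSum (repClass j)) =
      Matrix.diagonal (fun _ ↦ (Z.index : ℂ)) i j := by
  have := Fintype.ofFinite A
  rw [classSum_eq_single, classSum_eq_single]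
  obtain rfl | h := eq_or_ne i j
  · rw [Matrix.diagonal_apply_eq, hform_ephi_mul_single_self]
  · rw [Matrix.diagonal_apply_ne _ h]
    exact hform_ephi_mul_single_of_ne Z φ ((repCoset_bijective Z φ).1.ne h)

theorem gammaPhi_eq : gammaPhi A Z φ = (Z.index : ℝ) ^ Z.index := by
  let := Fintype.ofFinite (RepIdx A Z φ)
  let := Classical.decEq (RepIdx A Z φ)
  have hgram : Matrix.of (fun i j : RepIdx A Z φ ↦
      hform (ephi Z φ * classSum (repClass i)) (ephi Z φ * classSum (repClass j))) =
      Matrix.diagonal fun _ ↦ (Z.index : ℂ) :=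
    Matrix.ext (hform_ephi_mul_classSum Z φ)
  rw [gammaPhi, hgram, Matrix.det_diagonal, Finset.prod_const, Finset.card_univ,
    ← Nat.card_eq_fintype_card, card_repIdx, norm_pow, Complex.norm_natCast]

theorem cPhi_eq : cPhi A Z φ = (Z.index : ℚ) ^ Z.index := by
  have hfactor : ∀ o : RepIdx A Z φ,
      (Nat.card (Subgroup.centralizer {Quotient.out (repClass o)} : Subgroup A) : ℚ) /
        (annZ Z (repClass o)).index = Z.index := fun o ↦ by
    rw [annZ_eq_bot, Subgroup.index_bot, Subgroup.centralizer_eq_top_iff_subset.2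
      (by simp [CommGroup.center_eq_top]), Subgroup.card_top, ← Z.card_mul_index, Nat.cast_mul,
      mul_div_cancel_left₀ _ (Nat.cast_ne_zero.2 Nat.card_pos.ne')]
  have := Fintype.ofFinite (RepIdx A Z φ)
  rw [cPhi, finprod_congr hfactor, finprod_eq_prod_of_fintype, Finset.prod_const,
    Finset.card_univ, ← Nat.card_eq_fintype_card, card_repIdx]

end Invariants

/-- for a finite abelian group `A`, any subgroup `Z` and any `φ ∈ Irr(Z)`,
`μ_φ(A) = 1`; in fact `γ_φ(A) = c_φ(A) = |A/Z|^{|A/Z|}`. -/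
theorem stmt14 (A : Type*) [CommGroup A] [Finite A] (Z : Subgroup A) (φ : ↥Z →* ℂˣ) :
    muPhi A Z φ = 1 ∧ gammaPhi A Z φ = (Z.index : ℝ) ^ Z.index ∧
      cPhi A Z φ = (Z.index : ℚ) ^ Z.index := by
  refine ⟨?_, gammaPhi_eq Z φ, cPhi_eq Z φ⟩
  have hindex : (Z.index : ℝ) ≠ 0 := Nat.cast_ne_zero.2 Subgroup.index_ne_zero_of_finite
  rw [muPhi, gammaPhi_eq, cPhi_eq, Rat.cast_pow, Rat.cast_natCast,
    div_self (pow_ne_zero _ hindex)]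
end
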